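/- arXiv:2603.12576 — 2 statements merged into one kernel-verified Lean document; each statement's English description precedes it below -/
import Mathlib

section
/- Let P₁ and P₂ be probability measures on ℝ such that H = F_{P₁} − F_{P₂} is Lebesgue-integrable on ℝ, and let Ĥ denote its Fourier transform in the symmetric convention. Then for every ω ≠ 0, −√(2π) · i · ω · conj(Ĥ(ω)) = φ_{P₁}(ω) − φ_{P₂}(ω), where conj denotes complex conjugation; i.e. the conjugate-linear multiplier operator U defined by (ÛH)(ω) = −√(2π) i ω conj(Ĥ(ω)) carries the CDF difference F_{P₁} − F_{P₂} to the difference of spectral embeddings (φ_{P₁} − 1) − (φ_{P₂} − 1). -/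
open MeasureTheory Filter

/-- The cumulative distribution function of a measure on `ℝ`. -/
noncomputable def cdfFn (P : Measure ℝ) (x : ℝ) : ℝ := (P (Set.Iic x)).toReal

/-- The characteristic function `φ_P(ω) = ∫ e^{iωx} dP(x)`. -/
noncomputable def charFn (P : Measure ℝ) (ω : ℝ) : ℂ :=
  ∫ x, Complex.exp (Complex.I * (ω : ℂ) * (x : ℂ)) ∂P

/-- The Fourier transform with the symmetric convention
`f̂(ω) = (1/√(2π)) ∫ f(x) e^{-iωx} dx`, for a real-valued function. -/
noncomputable def fourierSym (f : ℝ → ℝ) (ω : ℝ) : ℂ :=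
  ((Real.sqrt (2 * Real.pi) : ℂ))⁻¹ *
    ∫ x : ℝ, (f x : ℂ) * Complex.exp (-(Complex.I * (ω : ℂ) * (x : ℂ)))

/-!
For `t ∈ [-R, R]`, `e^{iωt} = e^{iωR} - iω ∫_{[-R,R)} 1_{t ≤ x} e^{iωx} dx`. Applying this to `t`
clamped to `[-R, R]`, integrating against `P` and exchanging the integrals gives, for every `R`,
`∫ e^{iω clamp_R(t)} dP(t) = e^{iωR} - iω ∫_{[-R,R)} F_P(x) e^{iωx} dx`.
Without the clamp, Fubini would need a first moment of `P`. The constant `e^{iωR}` cancels in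
the difference of two measures, and letting `R → ∞` (dominated convergence on the left,
integrability of `F_{P₁} - F_{P₂}` on the right) gives
`φ_{P₁}(ω) - φ_{P₂}(ω) = -iω ∫ H(x) e^{iωx} dx`, the conjugate of the claimed multiplier identity.
-/

open Set Complex ComplexConjugate

lemma norm_exp_I_mul_ofReal_mul (ω x : ℝ) : ‖cexp (I * ω * x)‖ = 1 := by
  simp [Complex.norm_exp]

lemma integrable_exp_I_mul_ofReal_mul {α : Type*} [MeasurableSpace α] (μ : Measure α)
    [IsFiniteMeasure μ] {f : α → ℝ} (hf : Measurable f) (ω : ℝ) :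
    Integrable (fun x => cexp (I * ω * f x)) μ :=
  Integrable.of_bound (by fun_prop) 1
    (Eventually.of_forall fun x => (norm_exp_I_mul_ofReal_mul ω (f x)).le)

lemma monotone_cdfFn (P : Measure ℝ) [IsFiniteMeasure P] : Monotone (cdfFn P) :=
  fun _ _ hxy => ENNReal.toReal_mono (measure_ne_top P _) (measure_mono (Iic_subset_Iic.2 hxy))

lemma norm_cdfFn_le_one (P : Measure ℝ) [IsProbabilityMeasure P] (x : ℝ) : ‖cdfFn P x‖ ≤ 1 := by
  rw [cdfFn, Real.norm_of_nonneg ENNReal.toReal_nonneg, ← measureReal_def]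
  exact measureReal_le_one

lemma integrable_cdfFn_mul_exp (P μ : Measure ℝ) [IsProbabilityMeasure P] [IsFiniteMeasure μ]
    (ω : ℝ) : Integrable (fun x => (cdfFn P x : ℂ) * cexp (I * ω * x)) μ :=
  Integrable.bdd_mul (c := 1) (integrable_exp_I_mul_ofReal_mul μ (f := fun x => x) measurable_id ω)
    (measurable_ofReal.comp (monotone_cdfFn P).measurable).aestronglyMeasurable
    (Eventually.of_forall fun x => by simpa using norm_cdfFn_le_one P x)

lemma mul_setIntegral_Ico_exp (ω a b : ℝ) :
    I * ω * ∫ x in Ico a b, cexp (I * ω * x) = cexp (I * ω * b) - cexp (I * ω * min b a) := by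
  rcases eq_or_ne ω 0 with rfl | hω
  · simp
  rcases le_total a b with hab | hba
  · have hc : I * (ω : ℂ) ≠ 0 := by simp [hω]
    rw [integral_Ico_eq_integral_Ioc, ← intervalIntegral.integral_of_le hab,
      integral_exp_mul_complex hc, min_eq_right hab, mul_div_cancel₀ _ hc]
  · simp [Ico_eq_empty_of_le hba, min_eq_left hba]

lemma integral_cdfFn_mul (P μ : Measure ℝ) [IsFiniteMeasure P] [SFinite μ] {g : ℝ → ℂ}
    (hg : Integrable g μ) :
    ∫ x, (cdfFn P x : ℂ) * g x ∂μ = ∫ t, ∫ x in Ici t, g x ∂μ ∂P := by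
  have hswap : (Function.uncurry fun x t => (Iic x).indicator (fun _ => g x) t) =
      {p : ℝ × ℝ | p.2 ≤ p.1}.indicator (fun p => g p.1) := by
    ext ⟨x, t⟩
    simp [indicator_apply]
  have hint : Integrable (Function.uncurry fun x t => (Iic x).indicator (fun _ => g x) t)
      (μ.prod P) := by
    rw [hswap]
    exact (hg.comp_fst P).indicator (measurableSet_le measurable_snd measurable_fst)
  calc ∫ x, (cdfFn P x : ℂ) * g x ∂μ
      = ∫ x, ∫ t, (Iic x).indicator (fun _ => g x) t ∂P ∂μ := by
        congr with x
        rw [integral_indicator_const _ measurableSet_Iic, real_smul, cdfFn, measureReal_def]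
    _ = ∫ t, ∫ x, (Ici t).indicator g x ∂μ ∂P := by
        rw [integral_integral_swap hint]
        congr with t
    _ = ∫ t, ∫ x in Ici t, g x ∂μ ∂P := by
        simp_rw [integral_indicator measurableSet_Ici]

lemma integral_exp_clamp (P : Measure ℝ) [IsProbabilityMeasure P] (ω R : ℝ) :
    ∫ t, cexp (I * ω * min R (max (-R) t)) ∂P =
      cexp (I * ω * R) - I * ω * ∫ x in Ico (-R) R, (cdfFn P x : ℂ) * cexp (I * ω * x) := by
  have hexp := integrable_exp_I_mul_ofReal_mul (volume.restrict (Ico (-R) R)) (f := fun x => x)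
    measurable_id ω
  have hclamp := integrable_exp_I_mul_ofReal_mul P (f := fun t => min R (max (-R) t))
    (by fun_prop) ω
  have hinner (t : ℝ) : I * ω * ∫ x in Ici t, cexp (I * ω * x) ∂volume.restrict (Ico (-R) R) =
      cexp (I * ω * R) - cexp (I * ω * min R (max (-R) t)) := by
    rw [Measure.restrict_restrict measurableSet_Ici, inter_comm, Ico_inter_Ici]
    exact mul_setIntegral_Ico_exp ω _ R
  rw [integral_cdfFn_mul P _ hexp, ← integral_const_mul]
  simp_rw [hinner]
  rw [integral_sub (integrable_const _) hclamp, integral_const]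
  simp

lemma tendsto_integral_exp_clamp (P : Measure ℝ) [IsFiniteMeasure P] (ω : ℝ) :
    Tendsto (fun R : ℝ => ∫ t, cexp (I * ω * min R (max (-R) t)) ∂P) atTop
      (nhds (charFn P ω)) := by
  refine tendsto_integral_filter_of_dominated_convergence (fun _ => 1)
    (Eventually.of_forall fun R => (by fun_prop : Continuous _).aestronglyMeasurable)
    (Eventually.of_forall fun R => Eventually.of_forall fun t =>
      (norm_exp_I_mul_ofReal_mul ω _).le)
    (integrable_const 1) (Eventually.of_forall fun t => tendsto_const_nhds.congr' ?_)
  filter_upwards [eventually_ge_atTop |t|] with R hR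
  rw [max_eq_right (neg_le_of_abs_le hR), min_eq_right (le_of_abs_le hR)]

lemma tendsto_setIntegral_Ico_neg {E : Type*} [NormedAddCommGroup E] [NormedSpace ℝ E]
    {f : ℝ → E} (hf : Integrable f) :
    Tendsto (fun R => ∫ x in Ico (-R) R, f x) atTop (nhds (∫ x, f x)) := by
  refine (intervalIntegral_tendsto_integral hf tendsto_neg_atTop_atBot tendsto_id).congr' ?_
  filter_upwards [eventually_ge_atTop 0] with R hR
  rw [intervalIntegral.integral_of_le (by simpa using hR), integral_Ico_eq_integral_Ioc]
  rfl

lemma conj_fourierSym (f : ℝ → ℝ) (ω : ℝ) :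
    conj (fourierSym f ω) =
      (Real.sqrt (2 * Real.pi) : ℂ)⁻¹ * ∫ x, (f x : ℂ) * cexp (I * ω * x) := by
  rw [fourierSym, map_mul, map_inv₀, conj_ofReal, ← integral_conj]
  congr with x
  rw [map_mul, conj_ofReal, ← exp_conj]
  simp [conj_I]

/-- **The CDF–spectral multiplier identity.**
If `H = F_{P₁} - F_{P₂}` is Lebesgue integrable, then for every `ω ≠ 0`,
`-√(2π) · i · ω · conj(Ĥ(ω)) = φ_{P₁}(ω) - φ_{P₂}(ω)`:
the conjugate-linear multiplier operator `U` defined by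
`(ÛH)(ω) = -√(2π) i ω conj(Ĥ(ω))` carries the CDF difference `F_{P₁} - F_{P₂}` to the
difference of spectral embeddings `(φ_{P₁} - 1) - (φ_{P₂} - 1)`. -/
theorem multiplier_carries_cdf_to_spectral
    (P₁ P₂ : Measure ℝ) [IsProbabilityMeasure P₁] [IsProbabilityMeasure P₂]
    (H : ℝ → ℝ) (hH : ∀ x, H x = cdfFn P₁ x - cdfFn P₂ x)
    (hInt : Integrable H (volume : Measure ℝ)) :
    ∀ ω : ℝ, ω ≠ 0 →
      -(Real.sqrt (2 * Real.pi) : ℂ) * Complex.I * (ω : ℂ) *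
          (starRingEnd ℂ) (fourierSym H ω) =
        (charFn P₁ ω - 1) - (charFn P₂ ω - 1) := by
  intro ω _
  have htrunc (R : ℝ) :
      (∫ t, cexp (I * ω * min R (max (-R) t)) ∂P₁ - 1) -
          (∫ t, cexp (I * ω * min R (max (-R) t)) ∂P₂ - 1) =
        -(I * ω) * ∫ x in Ico (-R) R, (H x : ℂ) * cexp (I * ω * x) := by
    simp_rw [integral_exp_clamp, hH, ofReal_sub, sub_mul,
      integral_sub (integrable_cdfFn_mul_exp P₁ _ ω) (integrable_cdfFn_mul_exp P₂ _ ω)]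
    ring
  have hHexp : Integrable (fun x => (H x : ℂ) * cexp (I * ω * x)) :=
    hInt.ofReal.mul_bdd (c := 1) (by fun_prop)
      (Eventually.of_forall fun x => (norm_exp_I_mul_ofReal_mul ω x).le)
  have hcharFn_sub := tendsto_nhds_unique
    (((tendsto_integral_exp_clamp P₁ ω).sub_const 1).sub
      ((tendsto_integral_exp_clamp P₂ ω).sub_const 1))
    (by simpa only [htrunc] using (tendsto_setIntegral_Ico_neg hHexp).const_mul (-(I * ω)))
  rw [conj_fourierSym, hcharFn_sub]
  have hsqrt : (Real.sqrt (2 * Real.pi) : ℂ) ≠ 0 := by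
    exact_mod_cast (Real.sqrt_pos.2 Real.two_pi_pos).ne'
  field_simp
end

section
/- Let α be a measurable space, κ a Markov kernel from α to α, γ ∈ (0,1), and s ↦ ρ_s a measurable assignment of probability measures on ℝ, each supported in a fixed bounded interval [−R, R]. Let M ≥ 0 and let F : α × ℝ → ℝ be jointly measurable such that for every s ∈ α, F(s,·) is the CDF of a probability measure with ‖F(s,·) − F_{δ₀}‖_{L²(ℝ)} ≤ M. Then for every s ∈ α, the Bellman update (T F)(s)(x) = ∫_α ∫_ℝ F(s', (x − r)/γ) dρ_s(r) dκ(s)(s') satisfies (T F)(s,·) − F_{δ₀} ∈ L²(ℝ); i.e. the admissible CDF class Γ_F is invariant under the CDF Bellman operator with bounded rewards. -/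
open MeasureTheory ProbabilityTheory Filter

/-- The CDF of the Dirac measure at `0`: the indicator of `[0, ∞)`. -/
noncomputable def diracCdf (x : ℝ) : ℝ := if 0 ≤ x then 1 else 0

/-- The CDF Bellman operator: `(T F)(s)(x) = ∫ ∫ F(s', (x - r)/γ) dρ_s(r) dκ(s)(s')`. -/
noncomputable def bellmanCdf {α : Type*} [MeasurableSpace α]
    (κ : Kernel α α) (ρ : Kernel α ℝ) (γ : ℝ)
    (F : α → ℝ → ℝ) (s : α) (x : ℝ) : ℝ :=
  ∫ s', ∫ r, F s' ((x - r) / γ) ∂(ρ s) ∂(κ s)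

/-
Write `H` for `diracCdf`, `G = F - H` and `ω = κ s ⊗ ρ s`. Since `H ((x - r) / γ) = H (x - r)`,
  `(T F)(s)(x) - H x = ∫ G(s', (x - r) / γ) dω + ∫ (H (x - r) - H x) dω`.
Each `x ↦ G(s', (x - r) / γ)` has `L²` norm `√γ ‖G(s', ·)‖₂ ≤ √γ M`, and averaging over the
probability measure `ω` keeps the `L²` norm bounded (Jensen, then Tonelli). The second term
vanishes for `|x| > R`, because then `x - r` and `x` have the same sign for every `|r| ≤ R`.
-/

open Function Set

@[fun_prop]
lemma measurable_diracCdf : Measurable diracCdf :=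
  Measurable.ite measurableSet_Ici measurable_const measurable_const

lemma diracCdf_div_of_pos (x : ℝ) {c : ℝ} (hc : 0 < c) : diracCdf (x / c) = diracCdf x := by
  simp only [diracCdf, div_nonneg_iff, hc.le, hc.not_ge, and_true, and_false, or_false]

lemma norm_diracCdf_le_one (x : ℝ) : ‖diracCdf x‖ ≤ 1 := by
  unfold diracCdf; split_ifs <;> norm_num

lemma integrable_diracCdf_comp {β : Type*} [MeasurableSpace β] {ω : Measure β}
    [IsFiniteMeasure ω] {f : β → ℝ} (hf : Measurable f) :
    Integrable (fun b => diracCdf (f b)) ω :=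
  .of_bound (measurable_diracCdf.comp hf).aestronglyMeasurable 1
    (Eventually.of_forall fun _ => norm_diracCdf_le_one _)

lemma abs_diracCdf_sub_sub_le_indicator {r R : ℝ} (hr : r ∈ Icc (-R) R) (x : ℝ) :
    |diracCdf (x - r) - diracCdf x| ≤ (Icc (-R) R).indicator 1 x := by
  by_cases hx : x ∈ Icc (-R) R
  · rw [indicator_of_mem hx, Pi.one_apply, abs_le]
    unfold diracCdf
    constructor <;> split_ifs <;> norm_num
  · rw [indicator_of_notMem hx]
    rw [mem_Icc, not_and_or, not_le, not_le] at hx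
    obtain ⟨hr₁, hr₂⟩ := hr
    unfold diracCdf
    rcases hx with hx | hx
    · rw [if_neg (by linarith), if_neg (by linarith)]; simp
    · rw [if_pos (by linarith), if_pos (by linarith)]; simp

lemma memLp_integral_diracCdf_sub {β : Type*} [MeasurableSpace β] {ω : Measure β}
    [IsProbabilityMeasure ω] {r : β → ℝ} (hr : Measurable r) {R : ℝ}
    (hrR : ∀ᵐ b ∂ω, r b ∈ Icc (-R) R) (p : ENNReal) :
    MemLp (fun x => ∫ b, (diracCdf (x - r b) - diracCdf x) ∂ω) p volume := by
  have hind : MemLp ((Icc (-R) R).indicator (1 : ℝ → ℝ)) p volume :=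
    memLp_indicator_const p measurableSet_Icc 1 (Or.inr measure_Icc_lt_top.ne)
  refine hind.mono' ?_ (Eventually.of_forall fun x => ?_)
  · refine (StronglyMeasurable.integral_prod_left ?_).aestronglyMeasurable
    exact Measurable.stronglyMeasurable (by fun_prop)
  · simpa using norm_integral_le_of_norm_le_const
      (hrR.mono fun b hb =>
        (Real.norm_eq_abs _).trans_le (abs_diracCdf_sub_sub_le_indicator hb x))

lemma eLpNorm_rpow_toReal_eq_lintegral {X E : Type*} [MeasurableSpace X]
    [NormedAddCommGroup E] {μ : Measure X} {p : ENNReal} (hp0 : p ≠ 0) (hp : p ≠ ⊤)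
    (f : X → E) : eLpNorm f p μ ^ p.toReal = ∫⁻ x, ‖f x‖ₑ ^ p.toReal ∂μ := by
  rw [eLpNorm_eq_eLpNorm' hp0 hp,
    lintegral_rpow_enorm_eq_rpow_eLpNorm' (ENNReal.toReal_pos hp0 hp)]

lemma memLp_integral_of_eLpNorm_le {β X E : Type*} [MeasurableSpace β] [MeasurableSpace X]
    [NormedAddCommGroup E] [NormedSpace ℝ E] {ω : Measure β} [IsProbabilityMeasure ω]
    {μ : Measure X} [SFinite μ] {g : β → X → E} (hg : StronglyMeasurable (uncurry g))
    {p : ENNReal} (hp1 : 1 ≤ p) (hp : p ≠ ⊤) {C : ENNReal} (hC : C ≠ ⊤)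
    (hbound : ∀ b, eLpNorm (g b) p μ ≤ C) :
    MemLp (fun x => ∫ b, g b x ∂ω) p μ := by
  have hp0 : p ≠ 0 := (zero_lt_one.trans_le hp1).ne'
  refine ⟨hg.integral_prod_left.aestronglyMeasurable, ?_⟩
  rw [eLpNorm_lt_top_iff_lintegral_rpow_enorm_lt_top hp0 hp]
  calc ∫⁻ x, ‖∫ b, g b x ∂ω‖ₑ ^ p.toReal ∂μ
      ≤ ∫⁻ x, eLpNorm (g · x) p ω ^ p.toReal ∂μ := by
        gcongr with x
        calc ‖∫ b, g b x ∂ω‖ₑ ≤ eLpNorm (g · x) 1 ω := by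
              rw [eLpNorm_one_eq_lintegral_enorm]; exact enorm_integral_le_lintegral_enorm _
          _ ≤ eLpNorm (g · x) p ω := eLpNorm_le_eLpNorm_of_exponent_le hp1
              (hg.comp_measurable (measurable_id.prodMk measurable_const)).aestronglyMeasurable
    _ = ∫⁻ b, eLpNorm (g b) p μ ^ p.toReal ∂ω := by
        simp_rw [eLpNorm_rpow_toReal_eq_lintegral hp0 hp]
        exact lintegral_lintegral_swap (hg.enorm.pow_const _).aemeasurable.prod_swap
    _ ≤ ∫⁻ _, C ^ p.toReal ∂ω := by gcongr with b; exact hbound b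
    _ < ⊤ := by simpa using ENNReal.rpow_lt_top_of_nonneg ENNReal.toReal_nonneg hC

lemma map_volume_sub_div (r : ℝ) {c : ℝ} (hc : 0 < c) :
    Measure.map (fun x => (x - r) / c) volume = ENNReal.ofReal c • volume := by
  have : (fun x : ℝ => (x - r) / c) = (c⁻¹ * ·) ∘ (· - r) := by
    ext x; simp [div_eq_inv_mul]
  rw [this, ← Measure.map_map (measurable_const_mul _) (measurable_sub_const r),
    map_sub_right_eq_self, Real.map_volume_mul_left (inv_ne_zero hc.ne'), inv_inv,
    abs_of_pos hc]

lemma eLpNorm_comp_sub_div {E : Type*} [NormedAddCommGroup E] {f : ℝ → E}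
    (hf : AEStronglyMeasurable f volume) {p : ENNReal} (hp : p ≠ ⊤) (r : ℝ) {c : ℝ}
    (hc : 0 < c) :
    eLpNorm (fun x => f ((x - r) / c)) p volume
      = ENNReal.ofReal c ^ p.toReal⁻¹ * eLpNorm f p volume := by
  have hφ : Measurable fun x : ℝ => (x - r) / c := (measurable_sub_const r).div_const c
  have hf' : AEStronglyMeasurable f (Measure.map (fun x => (x - r) / c) volume) := by
    rw [map_volume_sub_div r hc]
    exact hf.smul_measure _
  rw [← comp_def, ← eLpNorm_map_measure hf' hφ.aemeasurable, map_volume_sub_div r hc,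
    eLpNorm_smul_measure_of_ne_top hp, smul_eq_mul, one_div, ENNReal.toReal_inv]

section Bellman

variable {α : Type*} [MeasurableSpace α] (κ : Kernel α α) (ρ : Kernel α ℝ) {γ : ℝ}
  {F : α → ℝ → ℝ}

lemma integrable_comp_sub_div_prod [IsFiniteKernel κ] [IsFiniteKernel ρ]
    (hF : Measurable (uncurry F)) {C : ℝ} (hFC : ∀ s y, ‖F s y‖ ≤ C) (s : α) (x : ℝ) :
    Integrable (fun p : α × ℝ => F p.1 ((x - p.2) / γ)) ((κ s).prod (ρ s)) :=
  .of_bound (hF.comp (measurable_fst.prodMk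
    ((measurable_const.sub measurable_snd).div_const γ))).aestronglyMeasurable C
    (Eventually.of_forall fun _ => hFC _ _)

lemma bellmanCdf_eq_integral_prod [IsFiniteKernel κ] [IsFiniteKernel ρ]
    (hF : Measurable (uncurry F)) {C : ℝ} (hFC : ∀ s y, ‖F s y‖ ≤ C) (s : α) (x : ℝ) :
    bellmanCdf κ ρ γ F s x = ∫ p, F p.1 ((x - p.2) / γ) ∂(κ s).prod (ρ s) :=
  (integral_prod _ (integrable_comp_sub_div_prod κ ρ hF hFC s x)).symm

lemma bellmanCdf_sub_diracCdf [IsMarkovKernel κ] [IsMarkovKernel ρ] (hγ : 0 < γ)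
    (hF : Measurable (uncurry F)) {C : ℝ} (hFC : ∀ s y, ‖F s y‖ ≤ C) (s : α) (x : ℝ) :
    bellmanCdf κ ρ γ F s x - diracCdf x =
      ∫ p, (F p.1 ((x - p.2) / γ) - diracCdf ((x - p.2) / γ)) ∂(κ s).prod (ρ s) +
        ∫ p, (diracCdf (x - p.2) - diracCdf x) ∂(κ s).prod (ρ s) := by
  have hint := integrable_comp_sub_div_prod κ ρ (γ := γ) hF hFC s x
  calc bellmanCdf κ ρ γ F s x - diracCdf x
      = ∫ p, (F p.1 ((x - p.2) / γ) - diracCdf x) ∂(κ s).prod (ρ s) := by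
        rw [integral_sub hint (integrable_const _), integral_const,
          bellmanCdf_eq_integral_prod κ ρ hF hFC]
        simp
    _ = _ := by
        have hG : Integrable (fun p => F p.1 ((x - p.2) / γ) - diracCdf ((x - p.2) / γ))
            ((κ s).prod (ρ s)) := hint.sub (integrable_diracCdf_comp (by fun_prop))
        have hJ : Integrable (fun p : α × ℝ => diracCdf (x - p.2) - diracCdf x)
            ((κ s).prod (ρ s)) :=
          (integrable_diracCdf_comp (by fun_prop)).sub (integrable_const _)
        rw [← integral_add hG hJ]
        congr 1 with p
        rw [diracCdf_div_of_pos _ hγ]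
        ring

end Bellman

theorem bellmanCdf_preserves_gammaF_general
    {α : Type*} [MeasurableSpace α]
    (κ : Kernel α α) [IsMarkovKernel κ]
    (ρ : Kernel α ℝ) [IsMarkovKernel ρ]
    (γ R : ℝ) (hγ : γ ∈ Set.Ioo (0 : ℝ) 1)
    (hρ : ∀ s, (ρ s) (Set.Icc (-R) R)ᶜ = 0)
    (M : ℝ)
    (F : α → ℝ → ℝ) (hmeas : Measurable (Function.uncurry F))
    (hcdf : ∀ s, ∃ P : Measure ℝ, IsProbabilityMeasure P ∧
      ∀ x, F s x = (P (Set.Iic x)).toReal)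
    (hbound : ∀ s, eLpNorm (fun x => F s x - diracCdf x) 2 volume ≤ ENNReal.ofReal M) :
    ∀ s, MemLp (fun x => bellmanCdf κ ρ γ F s x - diracCdf x) 2 (volume : Measure ℝ) := by
  intro s
  have hF : ∀ s y, ‖F s y‖ ≤ 1 := fun s y => by
    obtain ⟨P, _, hP⟩ := hcdf s
    rw [hP, Real.norm_of_nonneg ENNReal.toReal_nonneg]
    exact measureReal_le_one
  have hrewards : ∀ᵐ p ∂(κ s).prod (ρ s), p.2 ∈ Icc (-R) R :=
    Measure.quasiMeasurePreserving_snd.ae (mem_ae_iff.2 (hρ s))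
  have hG : Measurable (uncurry fun s y => F s y - diracCdf y) :=
    hmeas.sub (measurable_diracCdf.comp measurable_snd)
  simp_rw [bellmanCdf_sub_diracCdf κ ρ hγ.1 hmeas hF s]
  refine MemLp.add ?_ (memLp_integral_diracCdf_sub measurable_snd hrewards 2)
  refine memLp_integral_of_eLpNorm_le ?_ one_le_two ENNReal.ofNat_ne_top
    (C := ENNReal.ofReal γ ^ (2 : ENNReal).toReal⁻¹ * ENNReal.ofReal M) (by finiteness)
    fun p => ?_
  · exact (hG.comp (measurable_fst.fst.prodMk
      ((measurable_snd.sub measurable_fst.snd).div_const γ))).stronglyMeasurable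
  · have hGp : AEStronglyMeasurable (fun y => F p.1 y - diracCdf y) volume :=
      (hG.comp (measurable_const.prodMk measurable_id)).aestronglyMeasurable
    rw [eLpNorm_comp_sub_div hGp ENNReal.ofNat_ne_top p.2 hγ.1]
    gcongr
    exact hbound p.1

/-- **Invariance of the admissible CDF class `Γ_F` under the CDF Bellman operator with
bounded rewards.**  If each `F(s,·)` is a CDF with `‖F(s,·) - F_{δ₀}‖_{L²} ≤ M` and each
reward measure `ρ_s` is supported in `[-R, R]`, then for every state `s` the Bellman update
satisfies `(T F)(s,·) - F_{δ₀} ∈ L²(ℝ)`. -/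
theorem bellmanCdf_preserves_gammaF
    {α : Type*} [MeasurableSpace α]
    (κ : Kernel α α) [IsMarkovKernel κ]
    (ρ : Kernel α ℝ) [IsMarkovKernel ρ]
    (γ R : ℝ) (hγ : γ ∈ Set.Ioo (0 : ℝ) 1)
    (hρ : ∀ s, (ρ s) (Set.Icc (-R) R)ᶜ = 0)
    (M : ℝ) (hM : 0 ≤ M)
    (F : α → ℝ → ℝ) (hmeas : Measurable (Function.uncurry F))
    (hcdf : ∀ s, ∃ P : Measure ℝ, IsProbabilityMeasure P ∧
      ∀ x, F s x = (P (Set.Iic x)).toReal)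
    (hbound : ∀ s, eLpNorm (fun x => F s x - diracCdf x) 2 volume ≤ ENNReal.ofReal M) :
    ∀ s, MemLp (fun x => bellmanCdf κ ρ γ F s x - diracCdf x) 2 (volume : Measure ℝ) :=
  bellmanCdf_preserves_gammaF_general κ ρ γ R hγ hρ M F hmeas hcdf hbound
end
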